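/- For each purely improper d ∈ ℝ^m_{pi}⟨⟨X⟩⟩, the fixed point equation e = d^{⧢−1} ∘̄ δ_e has a unique solution e =: d^{∘−1} in ℝ^m⟨⟨X⟩⟩ (which is purely improper), and δ_{d^{∘−1}} is the two-sided inverse of δ_d in the monoid (δ ⧢ ℝ^m⟨⟨X⟩⟩, ∘). Consequently δ ⧢ ℝ^m_{pi}⟨⟨X⟩⟩ forms a group under the multiplicative composition product with identity δ_1. -/

import Mathlib

/-!
Everything rests on one principle: a map on vectors of series that gains one word length of
agreement (a strong contraction for `κ`) has exactly one fixed point. The coefficient of `x η`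
in `c ∘̄ δ_e` is the coefficient of `η` in `w_x ⧢ (x⁻¹c ∘̄ δ_e)`, with `w_{x₀} = 1` and
`w_{x_{j+1}} = e_j`, so it involves `e` only on words shorter than `x η`; hence
`e ↦ d^{⧢-1} ∘̄ δ_e` is such a contraction.

Since `· ∘̄ δ_e` is a morphism for `⧢`, a fixed point `e` satisfies
`e ⧢ (d ∘̄ δ_e) = (d^{⧢-1} ⧢ d) ∘̄ δ_e = 1`, i.e. `δ_d ∘ δ_e = δ_1`. For the other side,
associativity `(c ∘̄ δ_d) ∘̄ δ_g = c ∘̄ (δ_d ∘ δ_g)` makes both `δ_e ∘ δ_d` and `δ_1` fixed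
points of the contraction `g ↦ d ⧢ (d^{⧢-1} ∘̄ δ_g)`, so they coincide.
-/

open scoped BigOperators

namespace FPS

/-- A (noncommutative) formal power series over alphabet `X` is a map from words to `ℝ`. -/
abbrev Series (X : Type*) := List X → ℝ

noncomputable section

variable {X : Type*} [DecidableEq X]

/-- The series `1·∅`. -/
def one : Series X := fun η => if η = [] then 1 else 0

/-- Cauchy (concatenation) product. -/
def cauchy (c d : Series X) : Series X := fun η =>
  ∑ i ∈ Finset.range (η.length + 1), c (η.take i) * d (η.drop i)

/-- Shuffle product. -/
def sh (c d : Series X) : List X → ℝ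
  | [] => c [] * d []
  | x :: t => sh (fun w => c (x :: w)) d t + sh c (fun w => d (x :: w)) t

/-- Cauchy powers. -/
def cpow (c : Series X) : ℕ → Series X
  | 0 => one
  | k + 1 => cauchy c (cpow c k)

/-- Shuffle powers. -/
def shpow (c : Series X) : ℕ → Series X
  | 0 => one
  | k + 1 => sh c (shpow c k)

/-- The proper series `1 - s/(s,∅)` entering the inverse formulas (negated proper part of `s/(s,∅)`). -/
def sprime (s : Series X) : Series X := fun w => if w = [] then 0 else - (s w / s [])

/-- Cauchy inverse `(s,∅)⁻¹ Σ_k (s')^k` of a purely improper series. -/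
def cInv (s : Series X) : Series X := fun η =>
  (s [])⁻¹ * ∑ k ∈ Finset.range (η.length + 1), cpow (sprime s) k η

/-- Shuffle inverse `(s,∅)⁻¹ Σ_k (s')^{⧢k}` of a purely improper series. -/
def shInv (s : Series X) : Series X := fun η =>
  (s [])⁻¹ * ∑ k ∈ Finset.range (η.length + 1), shpow (sprime s) k η

/-- The order: minimal length of a word in the support (`⊤` for the zero series). -/
def ord (c : Series X) : ℕ∞ := sInf ((fun η : List X => (η.length : ℕ∞)) '' {η | c η ≠ 0})

/-- `σ^n` with `σ^⊤ = 0`. -/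
def powE (σ : ℝ) : ℕ∞ → ℝ := fun n => if n = ⊤ then 0 else σ ^ n.toNat

/-- The ultrametric `κ(c,d) = σ^{ord(c-d)}`. -/
def kappa (σ : ℝ) (c d : Series X) : ℝ := powE σ (ord (c - d))

/-- Order of a vector of series (minimum over components). -/
def ordV {n : ℕ} (c : Fin n → Series X) : ℕ∞ := ⨅ i, ord (c i)

/-- Ultrametric on vectors of series. -/
def kappaV (σ : ℝ) {n : ℕ} (c d : Fin n → Series X) : ℝ := powE σ (ordV (c - d))

/-- Proper part `c - (c,∅)∅`. -/
def properPart (c : Series X) : Series X := fun w => if w = [] then 0 else c w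

/-- Left concatenation by a letter: `x·s`. -/
def leftc (x : X) (s : Series X) : Series X := fun η =>
  match η with
  | [] => 0
  | y :: t => if y = x then s t else 0

end

noncomputable section

/-- `φ̄_d(η)` : the algebra homomorphism defining the multiplicative mixed composition
product, with `φ̄_d(x_0)(w) = x_0 w` and `φ̄_d(x_i)(w) = x_i (d_i ⧢ w)`. -/
def phiWord {m : ℕ} (d : Fin m → Series (Fin (m + 1))) :
    List (Fin (m + 1)) → Series (Fin (m + 1)) → Series (Fin (m + 1))
  | [], w => w
  | i :: t, w =>
      Fin.cases (leftc 0 (phiWord d t w)) (fun j => leftc j.succ (sh (d j) (phiWord d t w))) i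

/-- Multiplicative mixed composition product `c ∘̄ δ_d = Σ_η (c,η) φ̄_d(η)(1)`. -/
def mix {m : ℕ} (c : Series (Fin (m + 1))) (d : Fin m → Series (Fin (m + 1))) :
    Series (Fin (m + 1)) := fun η =>
  ∑ k ∈ Finset.range (η.length + 1),
    ∑ v : List.Vector (Fin (m + 1)) k, c v.toList * phiWord d v.toList one η

/-- `ψ_e(η)` : the algebra homomorphism defining the composition product, with
`ψ_e(x'_i)(w) = x_0 (e_i ⧢ w)`, `e_0 = 1∅`. -/
def psiWord {ℓ m : ℕ} (e : Fin ℓ → Series (Fin (m + 1))) :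
    List (Fin (ℓ + 1)) → Series (Fin (m + 1)) → Series (Fin (m + 1))
  | [], w => w
  | i :: t, w => leftc 0 (sh (Fin.cases one e i) (psiWord e t w))

/-- Composition product `c ∘ e = Σ_η (c,η) ψ_e(η)(1)`. -/
def comp {ℓ m : ℕ} (c : Series (Fin (ℓ + 1))) (e : Fin ℓ → Series (Fin (m + 1))) :
    Series (Fin (m + 1)) := fun η =>
  ∑ k ∈ Finset.range (η.length + 1),
    ∑ v : List.Vector (Fin (ℓ + 1)) k, c v.toList * psiWord e v.toList one η

/-- The multiplicative composition product on `δ`-series: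
`δ_c ∘ δ_d = δ_{d ⧢ (c ∘̄ δ_d)}`, expressed on the underlying series. -/
def star {m : ℕ} (c d : Fin m → Series (Fin (m + 1))) : Fin m → Series (Fin (m + 1)) :=
  fun i => sh (d i) (mix (c i) d)

/-- The all-ones series vector (generating series of the identity `δ_1`). -/
def oneV {X : Type*} [DecidableEq X] (m : ℕ) : Fin m → Series X := fun _ => one

open Classical in
/-- The inverse `d^{∘-1}` in the multiplicative dynamic output feedback group: the unique
solution of `e = d^{⧢-1} ∘̄ δ_e`. -/
def dynInv {m : ℕ} (d : Fin m → Series (Fin (m + 1))) : Fin m → Series (Fin (m + 1)) :=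
  if h : ∃ e : Fin m → Series (Fin (m + 1)), e = fun i => mix (shInv (d i)) e then h.choose
  else oneV m

/-- Shuffle power of a family: `c^{⧢n} = c_1^{⧢n_1} ⧢ ⋯ ⧢ c_ℓ^{⧢n_ℓ}`. -/
def shFam {X : Type*} [DecidableEq X] {ℓ : ℕ} (c : Fin ℓ → Series X) (n : Fin ℓ →₀ ℕ) :
    Series X :=
  (List.finRange ℓ).foldr (fun i acc => sh (shpow (c i) (n i)) acc) one

/-- Wiener-Fliess composition product `d ∘̂ c = Σ_{η∈X̃*} (d,η) c^{⧢η}` of a commutative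
series `d` with a (proper) noncommutative series vector `c`. -/
def wf {X : Type*} [DecidableEq X] {ℓ : ℕ} (d : MvPowerSeries (Fin ℓ) ℝ)
    (c : Fin ℓ → Series X) : Series X := fun η =>
  ∑ n ∈ Finset.Iic (Finsupp.equivFunOnFinite.symm fun _ : Fin ℓ => η.length),
    MvPowerSeries.coeff n d * shFam c n η

end

theorem _root_.List.induction_on_length {α : Type*} {P : List α → Prop} (w : List α)
    (nil : P []) (cons : ∀ x τ, (∀ w : List α, w.length ≤ τ.length → P w) → P (x :: τ)) : P w := by
  induction h : w.length using Nat.strong_induction_on generalizing w with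
  | _ n ih =>
    cases w with
    | nil => exact nil
    | cons x τ =>
      subst h
      exact cons x τ fun w hw => ih w.length (by simp; omega) w rfl

section Contraction

variable {ι α β : Type*}

/-- In terms of the ultrametric: `κ(g, g') ≤ σⁿ`. -/
def AgreeBelow (n : ℕ) (g g' : ι → List α → β) : Prop :=
  ∀ i w, w.length < n → g i w = g' i w

/-- Strong contraction with factor `σ` for `κ`. -/
def IsContraction (F : (ι → List α → β) → ι → List α → β) : Prop :=
  ∀ n g g', AgreeBelow n g g' → AgreeBelow (n + 1) (F g) (F g')

lemma agreeBelow_zero (g g' : ι → List α → β) : AgreeBelow 0 g g' :=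
  fun _ _ hw => absurd hw (Nat.not_lt_zero _)

namespace IsContraction

variable {F : (ι → List α → β) → ι → List α → β}

lemma agreeBelow_iterate (hF : IsContraction F) (g : ι → List α → β) (n k : ℕ) :
    AgreeBelow n (F^[n] g) (F^[n + k] g) := by
  induction n with
  | zero => exact agreeBelow_zero _ _
  | succ n ih =>
    rw [Nat.add_right_comm, Function.iterate_succ_apply', Function.iterate_succ_apply']
    exact hF n _ _ ih

lemma eq_of_isFixedPt (hF : IsContraction F) {g g' : ι → List α → β}
    (hg : Function.IsFixedPt F g) (hg' : Function.IsFixedPt F g') : g = g' := by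
  have h : ∀ n, AgreeBelow n g g' := by
    intro n
    induction n with
    | zero => exact agreeBelow_zero g g'
    | succ n ih => rw [← hg, ← hg']; exact hF n g g' ih
  funext i w
  exact h (w.length + 1) i w (Nat.lt_succ_self _)

/-- The limit of the iterates `Fⁿ g₀`, read off word by word. -/
lemma exists_isFixedPt [Nonempty β] (hF : IsContraction F) :
    ∃ g, Function.IsFixedPt F g := by
  obtain ⟨b⟩ := ‹Nonempty β›
  set x : ℕ → ι → List α → β := fun n => F^[n] fun _ _ => b
  refine ⟨fun i w => x (w.length + 1) i w, ?_⟩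
  have hlim : ∀ n, AgreeBelow n (fun i w => x (w.length + 1) i w) (x n) := by
    intro n i w hw
    obtain ⟨k, rfl⟩ := Nat.exists_eq_add_of_lt hw
    rw [Nat.add_right_comm]
    exact hF.agreeBelow_iterate _ (w.length + 1) k i w (Nat.lt_succ_self _)
  funext i w
  have := hF _ _ _ (hlim w.length) i w (Nat.lt_succ_self _)
  simp only [x, Function.iterate_succ_apply'] at this ⊢
  exact this

lemma existsUnique_isFixedPt [Nonempty β] (hF : IsContraction F) :
    ∃! g, Function.IsFixedPt F g :=
  let ⟨g, hg⟩ := hF.exists_isFixedPt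
  ⟨g, hg, fun _ hg' => hF.eq_of_isFixedPt hg' hg⟩

end IsContraction

end Contraction

section Shuffle

variable {X : Type*}

def shift (x : X) (c : Series X) : Series X := fun w => c (x :: w)

lemma shift_add (x : X) (a b : Series X) : shift x (a + b) = shift x a + shift x b := rfl

lemma shift_smul (x : X) (r : ℝ) (a : Series X) : shift x (r • a) = r • shift x a := rfl

lemma shift_one (x : X) : shift x (one : Series X) = 0 := by
  funext w
  simp [shift, one]

lemma sh_nil (a b : Series X) : sh a b [] = a [] * b [] := rfl

lemma sh_cons (a b : Series X) (x : X) (t : List X) :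
    sh a b (x :: t) = sh (shift x a) b t + sh a (shift x b) t := rfl

lemma shift_sh (x : X) (a b : Series X) :
    shift x (sh a b) = sh (shift x a) b + sh a (shift x b) := rfl

lemma sh_comm (a b : Series X) : sh a b = sh b a := by
  funext η
  induction η generalizing a b with
  | nil => exact mul_comm _ _
  | cons x t ih => rw [sh_cons, sh_cons, ih (shift x a) b, ih a (shift x b), add_comm]

lemma sh_add_left (a a' b : Series X) : sh (a + a') b = sh a b + sh a' b := by
  funext η
  induction η generalizing a a' b with
  | nil => exact add_mul _ _ _
  | cons x t ih =>
    simp only [Pi.add_apply, sh_cons, shift_add, ih] at ih ⊢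
    ring

lemma sh_smul_left (r : ℝ) (a b : Series X) : sh (r • a) b = r • sh a b := by
  funext η
  induction η generalizing a b with
  | nil => exact mul_assoc _ _ _
  | cons x t ih =>
    simp only [Pi.smul_apply, smul_eq_mul, sh_cons, shift_smul, ih] at ih ⊢
    ring

def shₗ : Series X →ₗ[ℝ] Series X →ₗ[ℝ] Series X :=
  LinearMap.mk₂ ℝ sh sh_add_left sh_smul_left
    (fun a b b' => by rw [sh_comm, sh_add_left, sh_comm b, sh_comm b'])
    (fun r a b => by rw [sh_comm, sh_smul_left, sh_comm])

lemma shₗ_apply (a b : Series X) : shₗ a b = sh a b := rfl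

lemma sh_zero_right (a : Series X) : sh a 0 = 0 := map_zero (shₗ a)

lemma sh_add_right (a b b' : Series X) : sh a (b + b') = sh a b + sh a b' :=
  map_add (shₗ a) b b'

lemma sh_smul_right (r : ℝ) (a b : Series X) : sh a (r • b) = r • sh a b :=
  map_smul (shₗ a) r b

lemma sh_sum_right {κ : Type*} (S : Finset κ) (a : Series X) (f : κ → Series X) :
    sh a (∑ s ∈ S, f s) = ∑ s ∈ S, sh a (f s) :=
  map_sum (shₗ a) f S

lemma sh_one_left (b : Series X) : sh one b = b := by
  funext η
  induction η generalizing b with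
  | nil => simp [sh_nil, one]
  | cons x t ih => rw [sh_cons, shift_one, sh_comm 0, sh_zero_right, ih]; simp [shift]

lemma sh_assoc (a b c : Series X) : sh (sh a b) c = sh a (sh b c) := by
  funext η
  induction η generalizing a b c with
  | nil => exact mul_assoc _ _ _
  | cons x t ih =>
    simp only [sh_cons, shift_sh, sh_add_left, sh_add_right, Pi.add_apply, ih]
    ring

lemma sh_congr {a a' b b' : Series X} (η : List X)
    (ha : ∀ w : List X, w.length ≤ η.length → a w = a' w)
    (hb : ∀ w : List X, w.length ≤ η.length → b w = b' w) :
    sh a b η = sh a' b' η := by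
  induction η generalizing a a' b b' with
  | nil => simp only [sh_nil, ha [] le_rfl, hb [] le_rfl]
  | cons x t ih =>
    simp only [List.length_cons] at ha hb
    rw [sh_cons, sh_cons,
      ih (a := shift x a) (a' := shift x a') (fun w hw => ha (x :: w) (by simpa using hw))
        (fun w hw => hb w (by omega)),
      ih (b := shift x b) (b' := shift x b') (fun w hw => ha w (by omega))
        (fun w hw => hb (x :: w) (by simpa using hw))]

lemma sh_eq_zero_of_length_lt {p q : Series X} {ka kb : ℕ} (η : List X)
    (hp : ∀ w : List X, w.length < ka → p w = 0) (hq : ∀ w : List X, w.length < kb → q w = 0)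
    (hη : η.length < ka + kb) : sh p q η = 0 := by
  induction η generalizing p q ka kb with
  | nil =>
    rw [sh_nil]
    rcases Nat.eq_zero_or_pos ka with rfl | hka
    · rw [hq [] (by simpa using hη), mul_zero]
    · rw [hp [] hka, zero_mul]
  | cons x t ih =>
    simp only [List.length_cons] at hη
    rw [sh_cons,
      ih (p := shift x p) (ka := ka - 1) (fun w hw => hp (x :: w) (by simp; omega)) hq
        (by omega),
      ih (q := shift x q) (kb := kb - 1) hp (fun w hw => hq (x :: w) (by simp; omega))
        (by omega),
      add_zero]

end Shuffle

section ShuffleInverse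

variable {X : Type*}

lemma sh_one_sub_left (p q : Series X) : sh (one - p) q = q - sh p q := by
  rw [← shₗ_apply, map_sub, LinearMap.sub_apply, shₗ_apply, shₗ_apply, sh_one_left]

lemma shpow_eq_zero_of_length_lt {p : Series X} (hp : p [] = 0) (k : ℕ) (w : List X)
    (hw : w.length < k) : shpow p k w = 0 := by
  induction k generalizing w with
  | zero => exact absurd hw (Nat.not_lt_zero _)
  | succ k ih =>
    refine sh_eq_zero_of_length_lt (ka := 1) w (fun v hv => ?_) ih (by omega)
    rw [List.length_eq_zero_iff.mp (Nat.lt_one_iff.mp hv), hp]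

lemma sprime_nil (s : Series X) : sprime s [] = 0 := if_pos rfl

lemma eq_smul_one_sub_sprime {s : Series X} (hs : s [] ≠ 0) : s = s [] • (one - sprime s) := by
  funext w
  cases w with
  | nil => simp [one, sprime]
  | cons x t => simp [one, sprime, mul_div_cancel₀ _ hs]

lemma shInv_nil (s : Series X) : shInv s [] = (s [])⁻¹ := by
  simp [shInv, shpow, one]

lemma shInv_eq_sum_range (s : Series X) {N : ℕ} (w : List X) (hw : w.length < N) :
    shInv s w = ((s [])⁻¹ • ∑ k ∈ Finset.range N, shpow (sprime s) k) w := by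
  simp only [shInv, Pi.smul_apply, Finset.sum_apply, smul_eq_mul]
  congr 1
  refine Finset.sum_subset (Finset.range_subset_range.mpr hw) fun k _ hk => ?_
  exact shpow_eq_zero_of_length_lt (sprime_nil s) k w (by simpa using hk)

lemma sh_shInv {s : Series X} (hs : s [] ≠ 0) : sh s (shInv s) = one := by
  funext η
  set N := η.length + 1
  have hgeom : sh (one - sprime s) (∑ k ∈ Finset.range N, shpow (sprime s) k)
      = one - shpow (sprime s) N := by
    simp only [sh_sum_right, sh_one_sub_left]
    exact Finset.sum_range_sub' (shpow (sprime s)) N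
  calc sh s (shInv s) η
      = sh (s [] • (one - sprime s))
          ((s [])⁻¹ • ∑ k ∈ Finset.range N, shpow (sprime s) k) η :=
        sh_congr η (fun w _ => by rw [← eq_smul_one_sub_sprime hs])
          (fun w hw => shInv_eq_sum_range s w (Nat.lt_succ_of_le hw))
    _ = one η - shpow (sprime s) N η := by
        rw [sh_smul_left, sh_smul_right, hgeom, smul_smul, mul_inv_cancel₀ hs, one_smul]
        rfl
    _ = one η := by
        rw [shpow_eq_zero_of_length_lt (sprime_nil s) N η (Nat.lt_succ_self _), sub_zero]

end ShuffleInverse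

lemma _root_.List.Vector.sum_succ {α M : Type*} [Fintype α] [AddCommMonoid M] (k : ℕ)
    (f : List.Vector α (k + 1) → M) :
    ∑ v, f v = ∑ i : α, ∑ t : List.Vector α k, f (i ::ᵥ t) := by
  let e : α × List.Vector α k ≃ List.Vector α (k + 1) :=
    { toFun := fun p => p.1 ::ᵥ p.2
      invFun := fun v => (v.head, v.tail)
      left_inv := fun p => by simp
      right_inv := fun v => by simp }
  rw [← e.sum_comp, Fintype.sum_prod_type]
  rfl

section MixedComposition

variable {m : ℕ}

/-- `φ̄_e(x)(w) = x (letterWeight e x ⧢ w)`: the weight of `x₀` is `1`, that of `x_{j+1}` is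
`e_j`. -/
def letterWeight (e : Fin m → Series (Fin (m + 1))) : Fin (m + 1) → Series (Fin (m + 1)) :=
  Fin.cases one e

lemma phiWord_cons (e : Fin m → Series (Fin (m + 1))) (i : Fin (m + 1))
    (t : List (Fin (m + 1))) (u : Series (Fin (m + 1))) :
    phiWord e (i :: t) u = leftc i (sh (letterWeight e i) (phiWord e t u)) := by
  cases i using Fin.cases with
  | zero => rw [letterWeight, Fin.cases_zero, sh_one_left]; rfl
  | succ j => rfl

lemma phiWord_apply_of_length_lt (e : Fin m → Series (Fin (m + 1))) (u : Series (Fin (m + 1)))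
    (v η : List (Fin (m + 1))) (h : η.length < v.length) : phiWord e v u η = 0 := by
  induction v generalizing η with
  | nil => exact absurd h (Nat.not_lt_zero _)
  | cons i t ih =>
    rw [phiWord_cons]
    cases η with
    | nil => rfl
    | cons x τ =>
      simp only [leftc]
      split_ifs
      · exact sh_eq_zero_of_length_lt (ka := 0) τ (fun _ h => absurd h (Nat.not_lt_zero _)) ih
          (by simpa using h)
      · rfl

lemma mix_eq_sum_range (c : Series (Fin (m + 1))) (e : Fin m → Series (Fin (m + 1)))
    {N : ℕ} (η : List (Fin (m + 1))) (hN : η.length < N) :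
    mix c e η = ∑ k ∈ Finset.range N,
      ∑ v : List.Vector (Fin (m + 1)) k, c v.toList * phiWord e v.toList one η := by
  refine Finset.sum_subset (Finset.range_subset_range.mpr hN) fun k _ hk => ?_
  refine Finset.sum_eq_zero fun v _ => ?_
  rw [phiWord_apply_of_length_lt e one v.toList η (by simp at hk; simp; omega), mul_zero]

lemma mix_nil (c : Series (Fin (m + 1))) (e : Fin m → Series (Fin (m + 1))) :
    mix c e [] = c [] := by
  simp [mix, phiWord, one]

lemma mix_cons (c : Series (Fin (m + 1))) (e : Fin m → Series (Fin (m + 1)))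
    (x : Fin (m + 1)) (τ : List (Fin (m + 1))) :
    mix c e (x :: τ) = sh (letterWeight e x) (mix (shift x c) e) τ := by
  have hφ : ∀ i (t : List (Fin (m + 1))), phiWord e (i :: t) one (x :: τ)
      = if x = i then sh (letterWeight e i) (phiWord e t one) τ else 0 := by
    intro i t
    rw [phiWord_cons]
    rfl
  calc mix c e (x :: τ)
      = ∑ k ∈ Finset.range (τ.length + 1), ∑ v : List.Vector (Fin (m + 1)) (k + 1),
          c v.toList * phiWord e v.toList one (x :: τ) := by
        rw [mix, List.length_cons, Finset.sum_range_succ']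
        simp [phiWord, one]
    _ = ∑ k ∈ Finset.range (τ.length + 1), ∑ t : List.Vector (Fin (m + 1)) k,
          shift x c t.toList * sh (letterWeight e x) (phiWord e t.toList one) τ := by
        refine Finset.sum_congr rfl fun k _ => ?_
        simp only [List.Vector.sum_succ, List.Vector.toList_cons, hφ, mul_ite, mul_zero,
          Finset.sum_ite_irrel, Finset.sum_const_zero, Finset.sum_ite_eq, Finset.mem_univ,
          if_true]
        rfl
    _ = sh (letterWeight e x) (∑ k ∈ Finset.range (τ.length + 1), ∑ t : List.Vector (Fin (m + 1)) k,
          shift x c t.toList • phiWord e t.toList one) τ := by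
        simp only [sh_sum_right, sh_smul_right, Finset.sum_apply, Pi.smul_apply, smul_eq_mul]
    _ = sh (letterWeight e x) (mix (shift x c) e) τ := by
        refine sh_congr τ (fun _ _ => rfl) fun w hw => ?_
        rw [mix_eq_sum_range (N := τ.length + 1) _ _ w (Nat.lt_succ_of_le hw)]
        simp only [Finset.sum_apply, Pi.smul_apply, smul_eq_mul]

lemma shift_mix (c : Series (Fin (m + 1))) (e : Fin m → Series (Fin (m + 1)))
    (x : Fin (m + 1)) : shift x (mix c e) = sh (letterWeight e x) (mix (shift x c) e) :=
  funext (mix_cons c e x)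

end MixedComposition

lemma IsContraction.sh_left {ι X : Type*} {F : (ι → Series X) → ι → Series X}
    (hF : IsContraction F) (a : ι → Series X) : IsContraction fun g i => sh (a i) (F g i) :=
  fun n g g' h i w hw =>
    sh_congr w (fun _ _ => rfl) fun v hv => hF n g g' h i v (lt_of_le_of_lt hv hw)

section MixProperties

variable {m : ℕ}

lemma mix_add (a b : Series (Fin (m + 1))) (e : Fin m → Series (Fin (m + 1))) :
    mix (a + b) e = mix a e + mix b e := by
  funext η
  simp only [mix, Pi.add_apply, add_mul, Finset.sum_add_distrib]

lemma mix_zero (e : Fin m → Series (Fin (m + 1))) : mix 0 e = 0 := by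
  funext η
  simp [mix]

lemma mix_one (e : Fin m → Series (Fin (m + 1))) : mix one e = one := by
  funext η
  cases η with
  | nil => exact mix_nil one e
  | cons x τ => rw [mix_cons, shift_one, mix_zero, sh_zero_right]; simp [one]

lemma letterWeight_oneV : letterWeight (oneV m) = fun _ => one := by
  funext x
  cases x using Fin.cases <;> rfl

lemma mix_oneV (c : Series (Fin (m + 1))) : mix c (oneV m) = c := by
  funext η
  induction η generalizing c with
  | nil => exact mix_nil c _
  | cons x τ ih => rw [mix_cons, letterWeight_oneV, sh_one_left, ih]; rfl

lemma letterWeight_congr {n : ℕ} {g g' : Fin m → Series (Fin (m + 1))} (h : AgreeBelow n g g')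
    (x : Fin (m + 1)) (w : List (Fin (m + 1))) (hw : w.length < n) :
    letterWeight g x w = letterWeight g' x w := by
  cases x using Fin.cases with
  | zero => rfl
  | succ j => exact h j w hw

lemma mix_congr {n : ℕ} {g g' : Fin m → Series (Fin (m + 1))} (h : AgreeBelow n g g')
    (c : Series (Fin (m + 1))) (η : List (Fin (m + 1))) (hη : η.length < n + 1) :
    mix c g η = mix c g' η := by
  induction η using List.induction_on_length generalizing c with
  | nil => rw [mix_nil, mix_nil]
  | cons x τ ih =>
    simp only [List.length_cons] at hη
    rw [mix_cons, mix_cons]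
    exact sh_congr τ (fun w hw => letterWeight_congr h x w (by omega))
      fun w hw => ih w hw _ (by omega)

lemma isContraction_mix (c : Fin m → Series (Fin (m + 1))) :
    IsContraction fun (e : Fin m → Series (Fin (m + 1))) i => mix (c i) e :=
  fun _ _ _ h i w hw => mix_congr h (c i) w hw

lemma mix_sh (e : Fin m → Series (Fin (m + 1))) (a b : Series (Fin (m + 1))) :
    mix (sh a b) e = sh (mix a e) (mix b e) := by
  funext η
  induction η using List.induction_on_length generalizing a b with
  | nil => simp only [mix_nil, sh_nil]
  | cons x τ ih =>
    rw [mix_cons, shift_sh, mix_add, sh_add_right, sh_cons, shift_mix, shift_mix,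
      Pi.add_apply, sh_assoc, ← sh_assoc (mix a e), sh_comm (mix a e), sh_assoc]
    congr 1
    · exact sh_congr τ (fun _ _ => rfl) fun w hw => ih w hw _ _
    · exact sh_congr τ (fun _ _ => rfl) fun w hw => ih w hw _ _

lemma letterWeight_star (d g : Fin m → Series (Fin (m + 1))) (x : Fin (m + 1)) :
    letterWeight (star d g) x = sh (letterWeight g x) (mix (letterWeight d x) g) := by
  cases x using Fin.cases with
  | zero => exact (by rw [mix_one, sh_one_left] : one = sh one (mix one g))
  | succ j => rfl

lemma mix_mix (c : Series (Fin (m + 1))) (d g : Fin m → Series (Fin (m + 1))) :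
    mix (mix c d) g = mix c (star d g) := by
  funext η
  induction η using List.induction_on_length generalizing c with
  | nil => rw [mix_nil, mix_nil, mix_nil]
  | cons x τ ih =>
    rw [mix_cons, mix_cons, shift_mix, mix_sh, letterWeight_star, sh_assoc]
    exact sh_congr τ (fun _ _ => rfl) fun w hw =>
      sh_congr w (fun _ _ => rfl) fun v hv => ih v (hv.trans hw) _

end MixProperties

/-- For purely improper `d`, the fixed point equation `e = d^{⧢-1} ∘̄ δ_e`
has a unique solution `d^{∘-1}`, which is purely improper and is the two-sided inverse of
`δ_d` in the monoid `(δ ⧢ ℝ^m⟨⟨X⟩⟩, ∘)`; moreover the purely improper series are closed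
under the monoid product, so `δ ⧢ ℝ^m_{pi}⟨⟨X⟩⟩` is a group. -/
theorem mult_dyn_feedback_group (m : ℕ) (d : Fin m → Series (Fin (m + 1)))
    (hd : ∀ i, d i [] ≠ 0) :
    (∃! e : Fin m → Series (Fin (m + 1)), e = fun i => mix (shInv (d i)) e) ∧
    (∀ e : Fin m → Series (Fin (m + 1)), (e = fun i => mix (shInv (d i)) e) →
      (∀ i, e i [] ≠ 0) ∧ star d e = oneV m ∧ star e d = oneV m) ∧
    (∀ c e : Fin m → Series (Fin (m + 1)),
      (∀ i, c i [] ≠ 0) → (∀ i, e i [] ≠ 0) → ∀ i, star c e i [] ≠ 0) := by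
  have hF := isContraction_mix fun i => shInv (d i)
  refine ⟨?_, fun e he => ?_, fun c e hc he i => ?_⟩
  · simpa only [Function.IsFixedPt, eq_comm] using hF.existsUnique_isFixedPt
  · replace he : ∀ i, e i = mix (shInv (d i)) e := congrFun he
    refine ⟨fun i => ?_, funext fun i => ?_, ?_⟩
    · rw [he, mix_nil, shInv_nil]
      exact inv_ne_zero (hd i)
    · rw [star, he, ← mix_sh, sh_comm, sh_shInv (hd i), mix_one]
      rfl
    · -- `star e d` and `oneV m` are fixed points of the contraction `g ↦ d ⧢ (d^{⧢-1} ∘̄ δ_g)`.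
      refine (hF.sh_left d).eq_of_isFixedPt (funext fun i => ?_) (funext fun i => ?_)
      · beta_reduce
        rw [← mix_mix, ← he i]
        rfl
      · beta_reduce
        rw [mix_oneV, sh_shInv (hd i)]
        rfl
  · rw [star, sh_nil, mix_nil]
    exact mul_ne_zero (he i) (hc i)

end FPS
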